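/- Let α > 0 and let u : [0,π] → ℂ be a function of bounded variation. Then there exists M > 0 such that for every z ∈ ℂ with |Im z| ≤ α and |z| ≥ 1, and every x ∈ [0,π]: |∫₀ˣ u(t)·cos(zt) dt| + |∫₀ˣ u(t)·sin(zt) dt| ≤ M/|z|. -/

import Mathlib

open MeasureTheory Set

/-!
Write `u` as a combination of four monotone functions (Jordan decomposition of its real and
imaginary parts). For monotone `g` with right-continuous version `G` and Stieltjes measure `ν`,
`G t = G 0 + ν (0, t]`, so Fubini gives
`∫₀ˣ g(t) e^{izt} dt = G 0 ∫₀ˣ e^{izt} dt + ∫_{(0,x]} (∫ₛˣ e^{izt} dt) dν(s)`,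
and in the strip every `∫ₛˣ e^{izt} dt = (e^{izx} - e^{izs}) / (iz)` is at most `2 e^{απ} / |z|`.
Finally `cos (zt)` and `sin (zt)` are combinations of `e^{izt}` and `e^{-izt}`.
-/

section StieltjesFubini

variable {E : Type*} [NormedAddCommGroup E] [NormedSpace ℝ E] [CompleteSpace E]

theorem setIntegral_measureReal_Ioc_smul_eq (ν : Measure ℝ) [IsLocallyFiniteMeasure ν]
    {e : ℝ → E} (he : Continuous e) (a b : ℝ) :
    ∫ t in Ioc a b, ν.real (Ioc a t) • e t = ∫ s in Ioc a b, (∫ t in s..b, e t) ∂ν := by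
  set F : ℝ → ℝ → E := fun t s => (Iic t).indicator (fun _ => e t) s
  have h_outer : ∀ t ∈ Ioc a b, ν.real (Ioc a t) • e t = ∫ s in Ioc a b, F t s ∂ν := by
    intro t ht
    rw [integral_indicator_const _ measurableSet_Iic, measureReal_restrict_apply measurableSet_Iic,
      Iic_inter_Ioc_of_le ht.2]
  have h_inner : ∀ s ∈ Ioc a b, ∫ t in Ioc a b, F t s = ∫ t in s..b, e t := by
    intro s hs
    have hF : (fun t => F t s) = (Ici s).indicator e := by
      ext t; simp [F, indicator_apply]
    have hset : Ioc a b ∩ Ici s = Icc s b := by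
      ext t
      simp only [mem_inter_iff, mem_Ioc, mem_Ici, mem_Icc]
      exact ⟨fun h => ⟨h.2, h.1.2⟩, fun h => ⟨⟨hs.1.trans_le h.1, h.2⟩, h.1⟩⟩
    rw [hF, setIntegral_indicator measurableSet_Ici, hset, intervalIntegral.integral_of_le hs.2,
      integral_Icc_eq_integral_Ioc]
  have : IsFiniteMeasure (ν.restrict (Ioc a b)) := isFiniteMeasure_restrict.2 measure_Ioc_lt_top.ne
  obtain ⟨K, hK⟩ := isCompact_Icc.exists_bound_of_continuousOn (he.continuousOn (s := Icc a b))
  have h_int : Integrable (Function.uncurry F)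
      ((volume.restrict (Ioc a b)).prod (ν.restrict (Ioc a b))) := by
    have hF : Function.uncurry F = {p : ℝ × ℝ | p.2 ≤ p.1}.indicator (e ∘ Prod.fst) := by
      ext ⟨t, s⟩; simp [F, indicator_apply]
    refine Integrable.mono' (integrable_const K) ?_ ?_
    · rw [hF]
      exact ((he.stronglyMeasurable.comp_measurable measurable_fst).indicator
        (measurableSet_le measurable_snd measurable_fst)).aestronglyMeasurable
    · rw [Measure.prod_restrict]
      filter_upwards [ae_restrict_mem (measurableSet_Ioc.prod measurableSet_Ioc)] with p hp
      rw [hF]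
      exact (norm_indicator_le_norm_self _ _).trans (hK _ (Ioc_subset_Icc_self hp.1))
  rw [setIntegral_congr_fun measurableSet_Ioc h_outer, integral_integral_swap h_int]
  exact setIntegral_congr_fun measurableSet_Ioc h_inner

theorem Monotone.stieltjesFunction_ae_eq {g : ℝ → ℝ} (hg : Monotone g) :
    hg.stieltjesFunction =ᵐ[volume] g := by
  filter_upwards [hg.countable_not_continuousAt.ae_notMem volume] with t ht
  exact hg.continuousWithinAt_Ioi_iff_rightLim_eq.1 (not_not.1 ht).continuousWithinAt

theorem norm_integral_smul_le_of_monotone {g : ℝ → ℝ} (hg : Monotone g) {e : ℝ → E}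
    (he : Continuous e) {a b B : ℝ} (hab : a ≤ b) (hB : ∀ s ∈ Icc a b, ‖∫ t in s..b, e t‖ ≤ B) :
    ‖∫ t in a..b, g t • e t‖ ≤
      (|hg.stieltjesFunction a| + (hg.stieltjesFunction b - hg.stieltjesFunction a)) * B := by
  set G := hg.stieltjesFunction
  have h_split : ∫ t in a..b, g t • e t =
      G a • (∫ t in a..b, e t) + ∫ t in Ioc a b, (G t - G a) • e t := by
    rw [intervalIntegral.integral_congr_ae
        (hg.stieltjesFunction_ae_eq.mono fun t ht _ => by rw [← ht]),
      intervalIntegral.integral_of_le hab, intervalIntegral.integral_of_le hab, ← integral_smul,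
      ← integral_add]
    · simp only [← add_smul, add_sub_cancel]; rfl
    · exact he.integrableOn_Ioc.smul (G a)
    · exact ((G.mono.intervalIntegrable.sub intervalIntegrable_const).smul_continuousOn
        he.continuousOn).1
  have h_fubini : ∫ t in Ioc a b, (G t - G a) • e t =
      ∫ s in Ioc a b, (∫ t in s..b, e t) ∂G.measure := by
    rw [← setIntegral_measureReal_Ioc_smul_eq G.measure he]
    refine setIntegral_congr_fun measurableSet_Ioc fun t ht => ?_
    rw [measureReal_def, G.measure_Ioc, ENNReal.toReal_ofReal (sub_nonneg.2 (G.mono ht.1.le))]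
  have h_measure : G.measure.real (Ioc a b) = G b - G a := by
    rw [measureReal_def, G.measure_Ioc, ENNReal.toReal_ofReal (sub_nonneg.2 (G.mono hab))]
  calc ‖∫ t in a..b, g t • e t‖
      ≤ |G a| * ‖∫ t in a..b, e t‖ + ‖∫ s in Ioc a b, (∫ t in s..b, e t) ∂G.measure‖ := by
        rw [h_split, h_fubini, ← Real.norm_eq_abs, ← norm_smul]; exact norm_add_le _ _
    _ ≤ |G a| * B + B * (G b - G a) := by
        refine add_le_add (mul_le_mul_of_nonneg_left (hB a ⟨le_rfl, hab⟩) (abs_nonneg _)) ?_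
        rw [← h_measure]
        exact norm_setIntegral_le_of_norm_le_const measure_Ioc_lt_top
          fun s hs => hB s (Ioc_subset_Icc_self hs)
    _ = (|G a| + (G b - G a)) * B := by ring

end StieltjesFubini

theorem MeasureTheory.IntegrableOn.intervalIntegrable_of_mem_Icc {E : Type*}
    [NormedAddCommGroup E] {f : ℝ → E} {a b x : ℝ} (hf : IntegrableOn f (Icc a b))
    (hx : x ∈ Icc a b) : IntervalIntegrable f volume a x :=
  (hf.mono_set (uIcc_of_le hx.1 ▸ Icc_subset_Icc_right hx.2)).intervalIntegrable

section Exponential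

open Complex

variable {α L : ℝ} {z : ℂ}

theorem norm_cexp_I_mul_le (hz : |z.im| ≤ α) {t : ℝ} (ht : t ∈ Icc 0 L) :
    ‖cexp (I * z * t)‖ ≤ Real.exp (α * L) := by
  rw [norm_exp, Real.exp_le_exp]
  have h_re : (I * z * t).re = -z.im * t := by simp [mul_re]
  calc (I * z * t).re = -z.im * t := h_re
    _ ≤ |z.im| * t := mul_le_mul_of_nonneg_right (neg_le_abs _) ht.1
    _ ≤ α * L := mul_le_mul hz ht.2 ht.1 ((abs_nonneg _).trans hz)

theorem norm_integral_cexp_I_mul_le (hz₀ : z ≠ 0) (hz : |z.im| ≤ α) {s x : ℝ}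
    (hs : s ∈ Icc 0 L) (hx : x ∈ Icc 0 L) :
    ‖∫ t in s..x, cexp (I * z * t)‖ ≤ 2 * Real.exp (α * L) / ‖z‖ := by
  rw [integral_exp_mul_complex (mul_ne_zero I_ne_zero hz₀), norm_div, norm_mul, norm_I, one_mul]
  gcongr
  calc ‖cexp (I * z * x) - cexp (I * z * s)‖
      ≤ ‖cexp (I * z * x)‖ + ‖cexp (I * z * s)‖ := norm_sub_le _ _
    _ ≤ 2 * Real.exp (α * L) := by
        linarith [norm_cexp_I_mul_le hz hx, norm_cexp_I_mul_le hz hs]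

end Exponential

section Decay

open Complex

def HasExpIntegralDecay (α L : ℝ) (f : ℝ → ℂ) : Prop :=
  ∃ C, ∀ z : ℂ, |z.im| ≤ α → 1 ≤ ‖z‖ → ∀ x ∈ Icc 0 L,
    ‖∫ t in (0:ℝ)..x, f t * cexp (I * z * t)‖ ≤ C / ‖z‖

namespace HasExpIntegralDecay

variable {α L : ℝ} {f g : ℝ → ℂ}

theorem of_monotone {g : ℝ → ℝ} (hg : Monotone g) :
    HasExpIntegralDecay α L (fun t => (g t : ℂ)) := by
  set G := hg.stieltjesFunction
  refine ⟨(|G 0| + (G L - G 0)) * (2 * Real.exp (α * L)), fun z hzα hz x hx => ?_⟩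
  have hz₀ : z ≠ 0 := norm_pos_iff.1 (zero_lt_one.trans_le hz)
  have h := norm_integral_smul_le_of_monotone hg (e := fun t => cexp (I * z * t)) (by fun_prop)
    hx.1 fun s hs => norm_integral_cexp_I_mul_le hz₀ hzα ⟨hs.1, hs.2.trans hx.2⟩ hx
  simp only [real_smul] at h
  calc _ ≤ (|G 0| + (G x - G 0)) * (2 * Real.exp (α * L) / ‖z‖) := h
    _ ≤ (|G 0| + (G L - G 0)) * (2 * Real.exp (α * L) / ‖z‖) := by
        gcongr
        exact hx.2
    _ = _ := by ring

theorem congr (hf : HasExpIntegralDecay α L f) (hfg : EqOn f g (Icc 0 L)) :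
    HasExpIntegralDecay α L g := by
  obtain ⟨C, hC⟩ := hf
  refine ⟨C, fun z hzα hz x hx => ?_⟩
  rw [← intervalIntegral.integral_congr fun t ht => ?_]
  · exact hC z hzα hz x hx
  · rw [uIcc_of_le hx.1] at ht
    simp only [hfg ⟨ht.1, ht.2.trans hx.2⟩]

theorem add (hf : HasExpIntegralDecay α L f) (hg : HasExpIntegralDecay α L g)
    (hfi : IntegrableOn f (Icc 0 L)) (hgi : IntegrableOn g (Icc 0 L)) :
    HasExpIntegralDecay α L (f + g) := by
  obtain ⟨C, hC⟩ := hf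
  obtain ⟨D, hD⟩ := hg
  refine ⟨C + D, fun z hzα hz x hx => ?_⟩
  simp only [Pi.add_apply, add_mul]
  rw [intervalIntegral.integral_add
    ((hfi.intervalIntegrable_of_mem_Icc hx).mul_continuousOn (by fun_prop))
    ((hgi.intervalIntegrable_of_mem_Icc hx).mul_continuousOn (by fun_prop)), add_div]
  exact (norm_add_le _ _).trans (add_le_add (hC z hzα hz x hx) (hD z hzα hz x hx))

theorem sub (hf : HasExpIntegralDecay α L f) (hg : HasExpIntegralDecay α L g)
    (hfi : IntegrableOn f (Icc 0 L)) (hgi : IntegrableOn g (Icc 0 L)) :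
    HasExpIntegralDecay α L (f - g) := by
  obtain ⟨C, hC⟩ := hf
  obtain ⟨D, hD⟩ := hg
  refine ⟨C + D, fun z hzα hz x hx => ?_⟩
  simp only [Pi.sub_apply, sub_mul]
  rw [intervalIntegral.integral_sub
    ((hfi.intervalIntegrable_of_mem_Icc hx).mul_continuousOn (by fun_prop))
    ((hgi.intervalIntegrable_of_mem_Icc hx).mul_continuousOn (by fun_prop)), add_div]
  exact (norm_sub_le _ _).trans (add_le_add (hC z hzα hz x hx) (hD z hzα hz x hx))

theorem mul_const (hf : HasExpIntegralDecay α L f) (c : ℂ) :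
    HasExpIntegralDecay α L (fun t => f t * c) := by
  obtain ⟨C, hC⟩ := hf
  refine ⟨‖c‖ * C, fun z hzα hz x hx => ?_⟩
  simp only [mul_right_comm _ c, intervalIntegral.integral_mul_const, norm_mul, mul_comm ‖c‖,
    mul_div_right_comm]
  exact mul_le_mul_of_nonneg_right (hC z hzα hz x hx) (norm_nonneg c)

end HasExpIntegralDecay

end Decay

section BoundedVariation

variable {a b L α : ℝ}

theorem MonotoneOn.exists_monotone_eqOn_Icc {p : ℝ → ℝ} (hp : MonotoneOn p (Icc a b)) :
    ∃ q : ℝ → ℝ, Monotone q ∧ EqOn p q (Icc a b) := by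
  rcases le_or_gt a b with hab | hab
  · exact hp.exists_monotone_extension
      (hp.map_bddBelow subset_rfl ⟨a, fun _ hx => hx.1, left_mem_Icc.2 hab⟩)
      (hp.map_bddAbove subset_rfl ⟨b, fun _ hx => hx.2, right_mem_Icc.2 hab⟩)
  · exact ⟨0, monotone_const, by simp [Icc_eq_empty_of_lt hab]⟩

theorem BoundedVariationOn.integrableOn_Icc {𝕜 : Type*} [RCLike 𝕜] {u : ℝ → 𝕜}
    (hu : BoundedVariationOn u (Icc a b)) : IntegrableOn u (Icc a b) := by
  have h_real : ∀ f : ℝ → ℝ, BoundedVariationOn f (Icc a b) → IntegrableOn f (Icc a b) := by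
    intro f hf
    obtain ⟨p, q, hp, hq, rfl⟩ := hf.locallyBoundedVariationOn.exists_monotoneOn_sub_monotoneOn
    exact (hp.integrableOn_isCompact isCompact_Icc).sub (hq.integrableOn_isCompact isCompact_Icc)
  have hre := h_real _ ((RCLike.reCLM (K := 𝕜)).lipschitz.comp_boundedVariationOn hu)
  have him := h_real _ ((RCLike.imCLM (K := 𝕜)).lipschitz.comp_boundedVariationOn hu)
  simp only [Function.comp_def, RCLike.reCLM_apply, RCLike.imCLM_apply] at hre him
  exact Integrable.re_im_iff.1 ⟨hre, him⟩

theorem BoundedVariationOn.hasExpIntegralDecay_ofReal {f : ℝ → ℝ}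
    (hf : BoundedVariationOn f (Icc 0 L)) : HasExpIntegralDecay α L (fun t => (f t : ℂ)) := by
  obtain ⟨p, q, hp, hq, rfl⟩ := hf.locallyBoundedVariationOn.exists_monotoneOn_sub_monotoneOn
  obtain ⟨p', hp', hpp'⟩ := hp.exists_monotone_eqOn_Icc
  obtain ⟨q', hq', hqq'⟩ := hq.exists_monotone_eqOn_Icc
  refine ((HasExpIntegralDecay.of_monotone hp').sub (HasExpIntegralDecay.of_monotone hq')
    ((hp'.monotoneOn _).integrableOn_isCompact isCompact_Icc).ofReal
    ((hq'.monotoneOn _).integrableOn_isCompact isCompact_Icc).ofReal).congr fun t ht => ?_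
  simp [hpp' ht, hqq' ht]

theorem BoundedVariationOn.hasExpIntegralDecay {u : ℝ → ℂ}
    (hu : BoundedVariationOn u (Icc 0 L)) : HasExpIntegralDecay α L u := by
  have hre := Complex.reCLM.lipschitz.comp_boundedVariationOn hu
  have him := Complex.imCLM.lipschitz.comp_boundedVariationOn hu
  refine (hre.hasExpIntegralDecay_ofReal.add
    (him.hasExpIntegralDecay_ofReal.mul_const Complex.I) hre.integrableOn_Icc.ofReal
    (him.integrableOn_Icc.ofReal.mul_const Complex.I)).congr fun t _ => ?_
  simp [Complex.re_add_im]

end BoundedVariation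

section Trigonometric

open Complex

theorem norm_integral_mul_cos_add_norm_integral_mul_sin_le {f : ℝ → ℂ} {a b : ℝ}
    (hf : IntervalIntegrable f volume a b) (z : ℂ) :
    ‖∫ t in a..b, f t * cos (z * t)‖ + ‖∫ t in a..b, f t * sin (z * t)‖ ≤
      ‖∫ t in a..b, f t * cexp (I * z * t)‖ + ‖∫ t in a..b, f t * cexp (I * (-z) * t)‖ := by
  set P := ∫ t in a..b, f t * cexp (I * z * t)
  set N := ∫ t in a..b, f t * cexp (I * (-z) * t)
  have hP := hf.mul_continuousOn (g := fun t : ℝ => cexp (I * z * t)) (by fun_prop)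
  have hN := hf.mul_continuousOn (g := fun t : ℝ => cexp (I * (-z) * t)) (by fun_prop)
  have h_cos : ∫ t in a..b, f t * cos (z * t) = (P + N) / 2 := by
    rw [← intervalIntegral.integral_add hP hN, ← intervalIntegral.integral_div]
    congr 1 with t
    rw [cos]; ring_nf
  have h_sin : ∫ t in a..b, f t * sin (z * t) = (N - P) * (I / 2) := by
    rw [← intervalIntegral.integral_sub hN hP, ← intervalIntegral.integral_mul_const]
    congr 1 with t
    rw [sin]; ring_nf
  have h_half : ‖I / 2‖ = 1 / 2 := by simp
  rw [h_cos, h_sin, norm_div, norm_mul, h_half, RCLike.norm_ofNat]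
  linarith [norm_add_le P N, norm_sub_le N P]

end Trigonometric

theorem oscillatory_integral_decay_bounded_variation
    (α : ℝ) (u : ℝ → ℂ)
    (hu : BoundedVariationOn u (Icc 0 Real.pi)) :
    ∃ M > (0:ℝ), ∀ z : ℂ, |z.im| ≤ α → 1 ≤ ‖z‖ →
      ∀ x ∈ Icc (0:ℝ) Real.pi,
        ‖∫ t in (0:ℝ)..x, u t * Complex.cos (z * t)‖ +
          ‖∫ t in (0:ℝ)..x, u t * Complex.sin (z * t)‖ ≤ M / ‖z‖ := by
  obtain ⟨C, hC⟩ := hu.hasExpIntegralDecay (α := α)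
  refine ⟨max (2 * C) 1, by positivity, fun z hzα hz x hx => ?_⟩
  have hC_neg := hC (-z) (by rwa [Complex.neg_im, abs_neg]) (by rwa [norm_neg]) x hx
  rw [norm_neg] at hC_neg
  calc _ ≤ C / ‖z‖ + C / ‖z‖ :=
        (norm_integral_mul_cos_add_norm_integral_mul_sin_le
          (hu.integrableOn_Icc.intervalIntegrable_of_mem_Icc hx) z).trans
          (add_le_add (hC z hzα hz x hx) hC_neg)
    _ ≤ max (2 * C) 1 / ‖z‖ := by
        rw [← add_div, ← two_mul]
        exact div_le_div_of_nonneg_right (le_max_left _ _) (norm_nonneg z)
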